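/- Let g : ℝ² → ℝ be a smooth compactly supported function and c := exp∘g. Then (1/2)∫_{ℝ²} c⁻² |∇c|² Δc dx − ∫_{ℝ²} c⁻¹ (Δc)² dx = −∫_{ℝ²} c |D²(ln c)|² dx. -/

import Mathlib

open MeasureTheory Real

noncomputable section

/-- The plane `ℝ²` as a Euclidean space. -/
abbrev E2 : Type := EuclideanSpace ℝ (Fin 2)

/-- `i`-th partial derivative of a scalar function on `ℝ²`. -/
def pd (i : Fin 2) (f : E2 → ℝ) (x : E2) : ℝ :=
  fderiv ℝ f x (EuclideanSpace.single i 1)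

/-- Laplacian `Δf = ∑ i, ∂_i ∂_i f`. -/
def lap (f : E2 → ℝ) (x : E2) : ℝ := ∑ i, pd i (pd i f) x

/-- `|∇f|² = ∑ i, (∂_i f)²`. -/
def gradSq (f : E2 → ℝ) (x : E2) : ℝ := ∑ i, (pd i f x) ^ 2

/-- Squared Frobenius norm of the Hessian: `|D²f|² = ∑ i j, (∂²_{ij} f)²`. -/
def hessSq (f : E2 → ℝ) (x : E2) : ℝ := ∑ i, ∑ j, (pd i (pd j f) x) ^ 2

/-- `⟨D²f ∇f, ∇f⟩ = ∑ i j, (∂²_{ij} f)(∂_i f)(∂_j f)`. -/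
def hessGrad (f : E2 → ℝ) (x : E2) : ℝ :=
  ∑ i, ∑ j, pd i (pd j f) x * pd i f x * pd j f x

end

/-!
Since `c = exp g`, one has `|∇c|² = c² |∇g|²`, `Δc = c (|∇g|² + Δg)` and `ln c = g`, so the
identity says that `e^g (½ |∇g|² (|∇g|² + Δg) - (|∇g|² + Δg)² + |D²g|²)` has integral zero.
This integrand is the divergence of the compactly supported field
`e^g (D²g ∇g - (½ |∇g|² + Δg) ∇g)` (the computation uses the symmetry of third derivatives), and
the divergence of a compactly supported `C¹` field integrates to zero, by integration by parts
against the constant function `1`.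
-/

open scoped ContDiff

section PartialDerivative

variable {f h : E2 → ℝ} {x : E2} (i : Fin 2)

theorem pd_add (hf : DifferentiableAt ℝ f x) (hh : DifferentiableAt ℝ h x) :
    pd i (fun y => f y + h y) x = pd i f x + pd i h x := by
  simp [pd, fderiv_fun_add hf hh]

theorem pd_sub (hf : DifferentiableAt ℝ f x) (hh : DifferentiableAt ℝ h x) :
    pd i (fun y => f y - h y) x = pd i f x - pd i h x := by
  simp [pd, fderiv_fun_sub hf hh]

theorem pd_mul (hf : DifferentiableAt ℝ f x) (hh : DifferentiableAt ℝ h x) :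
    pd i (fun y => f y * h y) x = pd i f x * h x + f x * pd i h x := by
  simp only [pd, fderiv_fun_mul hf hh, add_apply, smul_apply, smul_eq_mul]
  ring

theorem pd_div_const (hf : DifferentiableAt ℝ f x) (a : ℝ) :
    pd i (fun y => f y / a) x = pd i f x / a := by
  simp [pd, div_eq_mul_inv, fderiv_mul_const hf, mul_comm]

theorem pd_pow (hf : DifferentiableAt ℝ f x) (n : ℕ) :
    pd i (fun y => f y ^ n) x = n * f x ^ (n - 1) * pd i f x := by
  simp [pd, fderiv_fun_pow n hf]

theorem pd_exp (hf : DifferentiableAt ℝ f x) :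
    pd i (fun y => Real.exp (f y)) x = Real.exp (f x) * pd i f x := by
  simp [pd, fderiv_exp hf]

theorem pd_sum {ι : Type*} (s : Finset ι) {F : ι → E2 → ℝ}
    (hF : ∀ j ∈ s, DifferentiableAt ℝ (F j) x) :
    pd i (fun y => ∑ j ∈ s, F j y) x = ∑ j ∈ s, pd i (F j) x := by
  simp [pd, fderiv_fun_sum hF]

theorem ContDiff.pd (hf : ContDiff ℝ ∞ f) : ContDiff ℝ ∞ (pd i f) :=
  (hf.fderiv_right (by simp)).clm_apply contDiff_const

theorem HasCompactSupport.pd (hf : HasCompactSupport f) : HasCompactSupport (pd i f) :=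
  hf.fderiv_apply (𝕜 := ℝ) _

theorem tsupport_pd_subset : tsupport (pd i f) ⊆ tsupport f :=
  tsupport_fderiv_apply_subset ℝ _

theorem pd_eq_zero_of_notMem_tsupport (hx : x ∉ tsupport f) : pd i f x = 0 := by
  simp [pd, Function.notMem_support.mp fun h => hx (support_fderiv_subset ℝ h)]

theorem pd_comm (hf : ContDiff ℝ 2 f) (j : Fin 2) : pd i (pd j f) = pd j (pd i f) := by
  funext x
  have hsnd : ∀ k l : Fin 2, pd k (pd l f) x
      = fderiv ℝ (fderiv ℝ f) x (EuclideanSpace.single k 1) (EuclideanSpace.single l 1) := by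
    intro k l
    have hdf : DifferentiableAt ℝ (fderiv ℝ f) x :=
      ((hf.fderiv_right (m := 1) le_rfl).differentiable one_ne_zero).differentiableAt
    unfold pd
    rw [fderiv_clm_apply hdf (differentiableAt_const _)]
    simp
  rw [hsnd, hsnd]
  exact hf.contDiffAt.isSymmSndFDerivAt (by simp [minSmoothness_of_isRCLikeNormedField]) _ _

theorem integrable_pd (hf : ContDiff ℝ 1 f) (hfc : HasCompactSupport f) : Integrable (pd i f) :=
  ((hf.continuous_fderiv one_ne_zero).clm_apply continuous_const).integrable_of_hasCompactSupport
    (hfc.pd i)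

theorem integral_pd_eq_zero (hf : ContDiff ℝ 1 f) (hfc : HasCompactSupport f) :
    ∫ x, pd i f x = 0 := by
  have := integral_mul_fderiv_eq_neg_fderiv_mul_of_integrable (f := fun _ => (1 : ℝ)) (g := f)
    (μ := volume) (v := EuclideanSpace.single i 1) (by simp)
    (by simp only [one_mul]; exact integrable_pd i hf hfc)
    (by simpa using hf.continuous.integrable_of_hasCompactSupport hfc)
    (fun _ _ => differentiableAt_const _) (fun y _ => (hf.differentiable one_ne_zero) y)
  simpa [pd] using this

theorem integral_sum_pd_eq_zero {V : Fin 2 → E2 → ℝ} (hV : ∀ i, ContDiff ℝ 1 (V i))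
    (hVc : ∀ i, HasCompactSupport (V i)) : ∫ x, ∑ i, pd i (V i) x = 0 := by
  rw [integral_finsetSum _ fun i _ => integrable_pd i (hV i) (hVc i)]
  exact Finset.sum_eq_zero fun i _ => integral_pd_eq_zero i (hV i) (hVc i)

end PartialDerivative

noncomputable section

def hessMulGrad (f : E2 → ℝ) (i : Fin 2) (x : E2) : ℝ := ∑ j, pd i (pd j f) x * pd j f x

def dissipationFlux (g : E2 → ℝ) (i : Fin 2) (x : E2) : ℝ :=
  Real.exp (g x) * (hessMulGrad g i x - (gradSq g x / 2 + lap g x) * pd i g x)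

end

section Smooth

variable {g : E2 → ℝ} (hg : ContDiff ℝ ∞ g) (i : Fin 2) (x : E2)
include hg

theorem contDiff_dissipationFlux : ContDiff ℝ ∞ (dissipationFlux g i) := by
  have h1 := fun j => hg.pd j
  have h2 := fun j k => (hg.pd k).pd j
  unfold dissipationFlux hessMulGrad gradSq lap
  fun_prop

theorem pd_gradSq : pd i (gradSq g) x = 2 * hessMulGrad g i x := by
  have hd := fun j => ((hg.pd j).differentiable (by simp)) x
  unfold gradSq
  rw [pd_sum (F := fun j y => pd j g y ^ 2) _ _ fun j _ => (hd j).pow 2, hessMulGrad,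
    Finset.mul_sum]
  refine Finset.sum_congr rfl fun j _ => ?_
  rw [pd_pow i (hd j)]
  push_cast
  ring

theorem pd_lap : pd i (lap g) x = ∑ j, pd i (pd j (pd j g)) x := by
  unfold lap
  exact pd_sum _ _ fun j _ => (((hg.pd j).pd j).differentiable (by simp)) x

theorem pd_hessMulGrad (k : Fin 2) :
    pd k (hessMulGrad g i) x
      = ∑ j, (pd k (pd i (pd j g)) x * pd j g x + pd i (pd j g) x * pd k (pd j g) x) := by
  have hd := fun j => ((hg.pd j).differentiable (by simp)) x
  have hd2 := fun j => (((hg.pd j).pd i).differentiable (by simp)) x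
  unfold hessMulGrad
  rw [pd_sum (F := fun j y => pd i (pd j g) y * pd j g y) _ _ fun j _ => (hd2 j).mul (hd j)]
  exact Finset.sum_congr rfl fun j _ => pd_mul k (hd2 j) (hd j)

theorem pd_dissipationFlux :
    pd i (dissipationFlux g i) x
      = Real.exp (g x) * (pd i g x * (hessMulGrad g i x - (gradSq g x / 2 + lap g x) * pd i g x)
        + pd i (hessMulGrad g i) x - (hessMulGrad g i x + pd i (lap g) x) * pd i g x
        - (gradSq g x / 2 + lap g x) * pd i (pd i g) x) := by
  have dg : Differentiable ℝ g := hg.differentiable (by simp)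
  have d1 := fun j => (hg.pd j).differentiable (by simp)
  have d2 := fun j k => ((hg.pd k).pd j).differentiable (by simp)
  have dQ : Differentiable ℝ (gradSq g) := by unfold gradSq; fun_prop
  have dD : Differentiable ℝ (lap g) := by unfold lap; fun_prop
  have dR : Differentiable ℝ (hessMulGrad g i) := by unfold hessMulGrad; fun_prop
  unfold dissipationFlux
  simp (disch := fun_prop) only [pd_mul, pd_exp, pd_sub, pd_add, pd_div_const, pd_gradSq hg]
  ring

theorem sum_pd_dissipationFlux :
    ∑ i, pd i (dissipationFlux g i) x
      = Real.exp (g x) * (gradSq g x * (gradSq g x + lap g x)) / 2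
        - Real.exp (g x) * (gradSq g x + lap g x) ^ 2 + Real.exp (g x) * hessSq g x := by
  -- `simp` rewrites inner terms first, so after `e1` these are the only mixed third derivatives
  -- left to identify.
  have e1 : pd 1 (pd 0 g) = pd 0 (pd 1 g) := pd_comm 1 (hg.of_le ENat.LEInfty.out) 0
  have t1 : pd 1 (pd 0 (pd 0 g)) = pd 0 (pd 0 (pd 1 g)) := by
    rw [pd_comm 1 ((hg.pd 0).of_le ENat.LEInfty.out) 0, e1]
  have t2 : pd 1 (pd 0 (pd 1 g)) = pd 0 (pd 1 (pd 1 g)) :=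
    pd_comm 1 ((hg.pd 1).of_le ENat.LEInfty.out) 0
  simp only [Fin.sum_univ_two, pd_dissipationFlux hg, pd_lap hg, pd_hessMulGrad hg]
  simp only [gradSq, lap, hessSq, hessMulGrad, Fin.sum_univ_two, e1, t1, t2]
  ring

end Smooth

theorem gradSq_exp_comp {g : E2 → ℝ} {x : E2} (hg : DifferentiableAt ℝ g x) :
    gradSq (fun y => Real.exp (g y)) x = Real.exp (g x) ^ 2 * gradSq g x := by
  simp only [gradSq, pd_exp _ hg, Finset.mul_sum]
  ring_nf

theorem lap_exp_comp {g : E2 → ℝ} (hg : ContDiff ℝ ∞ g) (x : E2) :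
    lap (fun y => Real.exp (g y)) x = Real.exp (g x) * (gradSq g x + lap g x) := by
  have dg : Differentiable ℝ g := hg.differentiable (by simp)
  have d1 := fun j => (hg.pd j).differentiable (by simp)
  have hpd : ∀ i, pd i (fun y => Real.exp (g y)) = fun y => Real.exp (g y) * pd i g y :=
    fun i => funext fun y => pd_exp i (dg y)
  simp (disch := fun_prop) only [lap, hpd, pd_mul, pd_exp, gradSq, mul_add, Finset.mul_sum,
    ← Finset.sum_add_distrib]
  ring_nf

theorem integral_exp_mul_dissipation {g : E2 → ℝ} (hg : ContDiff ℝ ∞ g)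
    (hgc : HasCompactSupport g) :
    (1 / 2) * (∫ x, Real.exp (g x) * (gradSq g x * (gradSq g x + lap g x)))
      - ∫ x, Real.exp (g x) * (gradSq g x + lap g x) ^ 2
      = -∫ x, Real.exp (g x) * hessSq g x := by
  have cont1 := fun j => (hg.pd j).continuous
  have cont2 := fun j k => ((hg.pd k).pd j).continuous
  have vanish1 : ∀ x ∉ tsupport g, ∀ i, pd i g x = 0 :=
    fun x hx i => pd_eq_zero_of_notMem_tsupport i hx
  have vanish2 : ∀ x ∉ tsupport g, ∀ i j, pd i (pd j g) x = 0 :=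
    fun x hx i j => pd_eq_zero_of_notMem_tsupport i fun h => hx (tsupport_pd_subset j h)
  have compact : ∀ F : E2 → ℝ, (∀ x ∉ tsupport g, F x = 0) → HasCompactSupport F :=
    fun F hF => .intro' hgc (isClosed_tsupport g) hF
  have integrable : ∀ F : E2 → ℝ, Continuous F → (∀ x ∉ tsupport g, F x = 0) → Integrable F :=
    fun F hF hF0 => hF.integrable_of_hasCompactSupport (compact F hF0)
  have hA := integrable (fun x => Real.exp (g x) * (gradSq g x * (gradSq g x + lap g x)))
    (by unfold gradSq lap; fun_prop) fun x hx => by simp [gradSq, vanish1 x hx]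
  have hB := integrable (fun x => Real.exp (g x) * (gradSq g x + lap g x) ^ 2)
    (by unfold gradSq lap; fun_prop) fun x hx => by simp [gradSq, lap, vanish1 x hx, vanish2 x hx]
  have hC := integrable (fun x => Real.exp (g x) * hessSq g x)
    (by unfold hessSq; fun_prop) fun x hx => by simp [hessSq, vanish2 x hx]
  have hdiv : ∫ x, (Real.exp (g x) * (gradSq g x * (gradSq g x + lap g x)) / 2
      - Real.exp (g x) * (gradSq g x + lap g x) ^ 2 + Real.exp (g x) * hessSq g x) = 0 := by
    simp_rw [← sum_pd_dissipationFlux hg]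
    exact integral_sum_pd_eq_zero (fun i => (contDiff_dissipationFlux hg i).of_le (by simp))
      fun i => compact _ fun x hx => by simp [dissipationFlux, hessMulGrad, vanish1 x hx]
  rw [integral_add ((hA.div_const 2).sub' hB) hC, integral_sub (hA.div_const 2) hB,
    integral_div] at hdiv
  linarith

/-- Equation (3.4): for `c = exp ∘ g` with `g` smooth and compactly supported,
`(1/2) ∫ c⁻² |∇c|² Δc − ∫ c⁻¹ (Δc)² = −∫ c |D²(ln c)|²`. -/
theorem stmt6 (g : E2 → ℝ) (hg : ContDiff ℝ (⊤ : ℕ∞) g) (hgc : HasCompactSupport g)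
    (c : E2 → ℝ) (hc : c = fun x => Real.exp (g x)) :
    (1 / 2) * (∫ x : E2, gradSq c x * lap c x / (c x) ^ 2)
      - (∫ x : E2, (lap c x) ^ 2 / c x)
      = -∫ x : E2, c x * hessSq (fun y => Real.log (c y)) x := by
  subst hc
  have hlog : (fun y => Real.log (Real.exp (g y))) = g := funext fun y => Real.log_exp (g y)
  have dg : Differentiable ℝ g := hg.differentiable (by simp)
  have hcross : ∀ x, gradSq (fun y => Real.exp (g y)) x * lap (fun y => Real.exp (g y)) x
      / Real.exp (g x) ^ 2 = Real.exp (g x) * (gradSq g x * (gradSq g x + lap g x)) := fun x => by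
    rw [gradSq_exp_comp (dg x), lap_exp_comp hg]
    field_simp
  have hlapSq : ∀ x, lap (fun y => Real.exp (g y)) x ^ 2 / Real.exp (g x)
      = Real.exp (g x) * (gradSq g x + lap g x) ^ 2 := fun x => by
    rw [lap_exp_comp hg]
    field_simp
  simp only [hcross, hlapSq, hlog]
  exact integral_exp_mul_dissipation hg hgc
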